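/- arXiv:2311.09899 — 2 statements merged into one kernel-verified Lean document; each statement's English description precedes it below -/
import Mathlib

section
/- Let g > 0, v : ℤ → ℂ bounded, E ∈ ℂ. Suppose there exists a bounded, nonzero solution u : ℤ → ℂ of the eigenvalue equation -e^g u(n+1) - e^{-g} u(n-1) + v(n) u(n) = E u(n) for all n ∈ ℤ. Then E belongs to the spectrum of the bounded operator H(g) on ℓ²(ℤ) defined by [H(g)w]_n = -e^g w_{n+1} - e^{-g} w_{n-1} + v(n) w_n. -/
set_option maxHeartbeats 1000000

/-- if the Hatano-Nelson eigenvalue equation admits a bounded nonzero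
solution, then E belongs to the spectrum of the Hatano-Nelson operator on ℓ²(ℤ). -/
theorem bounded_solution_mem_spectrum (g : ℝ) (hg : 0 < g) (v : ℤ → ℂ)
    (hv : ∃ M : ℝ, ∀ n : ℤ, ‖v n‖ ≤ M) (E : ℂ) (u : ℤ → ℂ)
    (hbd : ∃ M : ℝ, ∀ n : ℤ, ‖u n‖ ≤ M) (hne : u ≠ 0)
    (hsol : ∀ n : ℤ, -(Real.exp g : ℂ) * u (n + 1) - (Real.exp (-g) : ℂ) * u (n - 1)
      + v n * u n = E * u n)
    (T : lp (fun _ : ℤ => ℂ) 2 →L[ℂ] lp (fun _ : ℤ => ℂ) 2)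
    (hT : ∀ ψ : lp (fun _ : ℤ => ℂ) 2, ∀ n : ℤ,
      (T ψ : ℤ → ℂ) n = -(Real.exp g : ℂ) * (ψ : ℤ → ℂ) (n + 1)
        - (Real.exp (-g) : ℂ) * (ψ : ℤ → ℂ) (n - 1) + v n * (ψ : ℤ → ℂ) n) :
    E ∈ spectrum ℂ T := by
  classical
  obtain ⟨M, hM⟩ := hbd
  have hM0 : 0 ≤ M := le_trans (norm_nonneg _) (hM 0)
  by_contra hE
  rw [spectrum.notMem_iff] at hE
  set A : lp (fun _ : ℤ => ℂ) 2 →L[ℂ] lp (fun _ : ℤ => ℂ) 2 := algebraMap ℂ _ E - T with hAdef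
  obtain ⟨un, hun⟩ := hE
  have hSA : ∀ φ, (↑un⁻¹ : lp (fun _ : ℤ => ℂ) 2 →L[ℂ] lp (fun _ : ℤ => ℂ) 2) (A φ) = φ := by
    intro φ
    have h1 : (↑un⁻¹ : lp (fun _ : ℤ => ℂ) 2 →L[ℂ] lp (fun _ : ℤ => ℂ) 2) * A = 1 := by
      rw [← hun]; exact un.inv_mul
    have := congrArg
      (fun f : lp (fun _ : ℤ => ℂ) 2 →L[ℂ] lp (fun _ : ℤ => ℂ) 2 => f φ) h1
    simpa [ContinuousLinearMap.mul_apply] using this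
  set S : lp (fun _ : ℤ => ℂ) 2 →L[ℂ] lp (fun _ : ℤ => ℂ) 2 := ↑un⁻¹ with hSdef
  have hbound : ∀ φ, ‖φ‖ ≤ ‖S‖ * ‖A φ‖ := by
    intro φ
    conv_lhs => rw [← hSA φ]
    exact S.le_opNorm _
  have hAcoe : ∀ (φ : lp (fun _ : ℤ => ℂ) 2) (m : ℤ),
      (A φ : ℤ → ℂ) m = E * (φ : ℤ → ℂ) m - (T φ : ℤ → ℂ) m := by
    intro φ m
    simp [hAdef, Algebra.algebraMap_eq_smul_one, ContinuousLinearMap.sub_apply,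
      ContinuousLinearMap.smul_apply, lp.coeFn_sub, lp.coeFn_smul, Pi.sub_apply, Pi.smul_apply,
      smul_eq_mul]
    rfl
  have hcoe : ∀ (f : ℤ → ℂ) (s : Finset ℤ) (m : ℤ),
      ((∑ n ∈ s, lp.single 2 n (f n) : lp (fun _ : ℤ => ℂ) 2) : ℤ → ℂ) m
        = if m ∈ s then f m else 0 := by
    intro f s m
    simp only [lp.coeFn_sum, lp.single_apply, Finset.sum_apply, Finset.sum_dite_eq]
    simp [Pi.single_apply]
  have hp2 : (0:ℝ) < (2 : ENNReal).toReal := by norm_num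
  have hconv : ∀ x : ℝ, x ^ ((2 : ENNReal).toReal) = x ^ (2:ℕ) := by
    intro x
    rw [show ((2 : ENNReal).toReal) = (2:ℝ) by norm_num, Real.rpow_two]
  set eg : ℂ := (Real.exp g : ℂ)
  set emg : ℂ := (Real.exp (-g) : ℂ)
  have hegn : ‖eg‖ = Real.exp g := by
    simp only [eg, Complex.norm_real, Real.norm_eq_abs]
    exact abs_of_pos (Real.exp_pos g)
  have hemgn : ‖emg‖ = Real.exp (-g) := by
    simp only [emg, Complex.norm_real, Real.norm_eq_abs]
    exact abs_of_pos (Real.exp_pos (-g))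
  set K : ℝ := (Real.exp g + Real.exp (-g)) * M with hKdef
  have hK0 : 0 ≤ K := by positivity
  -- uniform bound on truncations
  have hPhi : ∀ i : ℤ, 1 ≤ i →
      ‖(∑ n ∈ Finset.Icc (-i) i, lp.single 2 n (u n) : lp (fun _ : ℤ => ℂ) 2)‖
        ≤ ‖S‖ * (2 * K) := by
    intro i hi
    set Φ : lp (fun _ : ℤ => ℂ) 2 := ∑ n ∈ Finset.Icc (-i) i, lp.single 2 n (u n) with hΦ
    set w : ℤ → ℂ := fun m =>
      if m = -i-1 then eg * u (-i) else if m = -i then -(emg * u (-i-1))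
      else if m = i then -(eg * u (i+1)) else if m = i+1 then emg * u i else 0 with hw
    set bnd : Finset ℤ := {-i-1, -i, i, i+1} with hbnd
    have hc_in : ∀ x : ℤ, -i ≤ x → x ≤ i → (Φ : ℤ → ℂ) x = u x := by
      intro x h1 h2
      rw [hΦ, hcoe, if_pos (Finset.mem_Icc.mpr ⟨h1, h2⟩)]
    have hc_out : ∀ x : ℤ, (x < -i ∨ i < x) → (Φ : ℤ → ℂ) x = 0 := by
      intro x hx
      rw [hΦ, hcoe, if_neg]
      intro hmem
      rw [Finset.mem_Icc] at hmem
      omega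
    have hw1 : w (-i-1) = eg * u (-i) := by simp only [hw]; simp
    have hw2 : w (-i) = -(emg * u (-i-1)) := by
      simp only [hw]; rw [if_neg (by omega)]; simp
    have hw3 : w i = -(eg * u (i+1)) := by
      simp only [hw]; rw [if_neg (by omega), if_neg (by omega)]; simp
    have hw4 : w (i+1) = emg * u i := by
      simp only [hw]; rw [if_neg (by omega), if_neg (by omega), if_neg (by omega)]; simp
    have key : A Φ = ∑ n ∈ bnd, lp.single 2 n (w n) := by
      apply lp.ext
      funext m
      rw [hAcoe, hT, hcoe w bnd m]
      by_cases h1 : m = -i-1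
      · subst h1
        rw [hc_in (-i-1+1) (by omega) (by omega), hc_out (-i-1-1) (by omega),
          hc_out (-i-1) (by omega), if_pos (by simp [hbnd]), hw1,
          show (-i-1+1 : ℤ) = -i by ring]
        ring
      · by_cases h2 : m = -i
        · subst h2
          rw [hc_in (-i+1) (by omega) (by omega), hc_out (-i-1) (by omega),
            hc_in (-i) (by omega) (by omega), if_pos (by simp [hbnd]), hw2]
          linear_combination (-1 : ℂ) * hsol (-i)
        · by_cases h3 : m = i
          · rw [h3]
            rw [hc_out (i+1) (by omega), hc_in (i-1) (by omega) (by omega),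
              hc_in i (by omega) (by omega), if_pos (by simp [hbnd]), hw3]
            linear_combination (-1 : ℂ) * hsol i
          · by_cases h4 : m = i+1
            · subst h4
              rw [hc_out (i+1+1) (by omega), hc_in (i+1-1) (by omega) (by omega),
                hc_out (i+1) (by omega), if_pos (by simp [hbnd]), hw4,
                show (i+1-1 : ℤ) = i by ring]
              ring
            · rw [if_neg (by simp only [hbnd, Finset.mem_insert, Finset.mem_singleton]; omega)]
              by_cases h5 : -i ≤ m ∧ m ≤ i
              · rw [hc_in (m+1) (by omega) (by omega), hc_in (m-1) (by omega) (by omega),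
                  hc_in m (by omega) (by omega)]
                linear_combination (-1 : ℂ) * hsol m
              · rw [hc_out (m+1) (by omega), hc_out (m-1) (by omega), hc_out m (by omega)]
                ring
    have hwle : ∀ n : ℤ, ‖w n‖ ≤ K := by
      intro n
      have hE1 := (Real.exp_pos g).le
      have hE2 := (Real.exp_pos (-g)).le
      simp only [hw]
      split_ifs
      · rw [norm_mul, hegn]
        nlinarith [hM (-i), norm_nonneg (u (-i))]
      · rw [norm_neg, norm_mul, hemgn]
        nlinarith [hM (-i-1), norm_nonneg (u (-i-1))]
      · rw [norm_neg, norm_mul, hegn]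
        nlinarith [hM (i+1), norm_nonneg (u (i+1))]
      · rw [norm_mul, hemgn]
        nlinarith [hM i, norm_nonneg (u i)]
      · simpa using hK0
    have hcard : bnd.card ≤ 4 := by
      rw [hbnd]
      refine le_trans (Finset.card_insert_le _ _) (Nat.succ_le_succ ?_)
      refine le_trans (Finset.card_insert_le _ _) (Nat.succ_le_succ ?_)
      refine le_trans (Finset.card_insert_le _ _) (Nat.succ_le_succ ?_)
      simp
    have hAn : ‖A Φ‖ ^ (2:ℕ) = ∑ n ∈ bnd, ‖w n‖ ^ (2:ℕ) := by
      have := lp.norm_sum_single hp2 w bnd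
      rw [← key] at this
      rw [← hconv, this]
      exact Finset.sum_congr rfl fun n _ => hconv _
    have hsumle : ∑ n ∈ bnd, ‖w n‖ ^ (2:ℕ) ≤ (2*K) ^ (2:ℕ) := by
      calc ∑ n ∈ bnd, ‖w n‖ ^ (2:ℕ) ≤ bnd.card • (K ^ (2:ℕ)) := by
            apply Finset.sum_le_card_nsmul
            intro x _
            exact pow_le_pow_left₀ (norm_nonneg _) (hwle x) 2
        _ = (bnd.card : ℝ) * K ^ (2:ℕ) := by rw [nsmul_eq_mul]
        _ ≤ 4 * K ^ (2:ℕ) := by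
            apply mul_le_mul_of_nonneg_right _ (by positivity)
            exact_mod_cast hcard
        _ = (2*K) ^ (2:ℕ) := by ring
    have hAle : ‖A Φ‖ ≤ 2 * K := by
      have h := hAn ▸ hsumle
      exact (pow_le_pow_iff_left₀ (norm_nonneg _) (by positivity) (by norm_num)).mp h
    calc ‖Φ‖ ≤ ‖S‖ * ‖A Φ‖ := hbound Φ
      _ ≤ ‖S‖ * (2 * K) := mul_le_mul_of_nonneg_left hAle (norm_nonneg S)
  -- u is in ℓ²
  have humem : Memℓp u 2 := by
    apply memℓp_gen' (C := (‖S‖ * (2*K)) ^ (2:ℕ))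
    intro s
    set i : ℤ := 1 + ∑ n ∈ s, |n| with hi
    have hsum0 : 0 ≤ ∑ n ∈ s, |n| := Finset.sum_nonneg fun x _ => abs_nonneg x
    have hi1 : 1 ≤ i := by rw [hi]; linarith
    have hsub : s ⊆ Finset.Icc (-i) i := by
      intro n hn
      have h1 : |n| ≤ ∑ m ∈ s, |m| :=
        Finset.single_le_sum (f := fun m => |m|) (fun x _ => abs_nonneg x) hn
      have h2 := abs_le.mp (h1.trans (by rw [hi]; linarith : (∑ m ∈ s, |m|) ≤ i))
      exact Finset.mem_Icc.mpr ⟨h2.1, h2.2⟩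
    have hΦn : ∑ n ∈ Finset.Icc (-i) i, ‖u n‖ ^ ((2:ENNReal).toReal)
        = ‖(∑ n ∈ Finset.Icc (-i) i, lp.single 2 n (u n) : lp (fun _ : ℤ => ℂ) 2)‖
          ^ ((2:ENNReal).toReal) :=
      (lp.norm_sum_single hp2 u _).symm
    calc ∑ n ∈ s, ‖u n‖ ^ ((2:ENNReal).toReal)
        ≤ ∑ n ∈ Finset.Icc (-i) i, ‖u n‖ ^ ((2:ENNReal).toReal) := by
          apply Finset.sum_le_sum_of_subset_of_nonneg hsub
          intro x _ _
          rw [hconv]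
          positivity
      _ = ‖(∑ n ∈ Finset.Icc (-i) i, lp.single 2 n (u n) : lp (fun _ : ℤ => ℂ) 2)‖
          ^ ((2:ENNReal).toReal) := hΦn
      _ ≤ (‖S‖ * (2*K)) ^ (2:ℕ) := by
          rw [hconv]
          exact pow_le_pow_left₀ (norm_nonneg _) (hPhi i hi1) 2
  -- eigenvector contradiction
  set U : lp (fun _ : ℤ => ℂ) 2 := ⟨u, humem⟩ with hU
  have hUcoe : (U : ℤ → ℂ) = u := rfl
  have hAU : A U = 0 := by
    apply lp.ext
    funext m
    rw [hAcoe, hT, hUcoe]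
    have : ((0 : lp (fun _ : ℤ => ℂ) 2) : ℤ → ℂ) m = 0 := rfl
    rw [this]
    linear_combination (-1 : ℂ) * hsol m
  have hU0 : U = 0 := by rw [← hSA U, hAU, map_zero]
  apply hne
  have := congrArg (fun x : lp (fun _ : ℤ => ℂ) 2 => (x : ℤ → ℂ)) hU0
  exact funext fun m => congrFun this m
end

section
/- Let g > 0 and E ∈ ℂ. For each n ∈ ℤ let φⁿ : ℤ → ℂ be the solution of the Hatano-Nelson equation -e^g φⁿ(m+1) - e^{-g} φⁿ(m-1) + v(m) φⁿ(m) = E φⁿ(m) (for all m ∈ ℤ) with initial data φⁿ(n) = 0 and φⁿ(n+1) = e^{-g}. Then for all m ∈ ℤ and all n ∈ ℤ: -e^{-g} φ^{n+1}(m) + (v(n) - E) φⁿ(m) - e^g φ^{n-1}(m) = 0. -/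
/-- the family of fundamental solutions φⁿ of the Hatano-Nelson equation
with data φⁿ(n) = 0, φⁿ(n+1) = e^{-g} satisfies the adjoint difference equation
-e^{-g} φ^{n+1}(m) + (v(n) - E) φⁿ(m) - e^g φ^{n-1}(m) = 0 in the index n. -/
theorem green_kernel_adjoint_equation (g : ℝ) (hg : 0 < g) (E : ℂ) (v : ℤ → ℂ)
    (φ : ℤ → ℤ → ℂ)
    (hsol : ∀ n m : ℤ, -(Real.exp g : ℂ) * φ n (m + 1) - (Real.exp (-g) : ℂ) * φ n (m - 1)
      + v m * φ n m = E * φ n m)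
    (hzero : ∀ n : ℤ, φ n n = 0)
    (hone : ∀ n : ℤ, φ n (n + 1) = (Real.exp (-g) : ℂ)) :
    ∀ m n : ℤ, -(Real.exp (-g) : ℂ) * φ (n + 1) m + (v n - E) * φ n m
      - (Real.exp g : ℂ) * φ (n - 1) m = 0 := by
  intro m n
  set a : ℂ := (Real.exp g : ℂ) with ha_def
  set b : ℂ := (Real.exp (-g) : ℂ) with hb_def
  have hab : a * b = 1 := by
    rw [ha_def, hb_def, ← Complex.ofReal_mul, ← Real.exp_add]
    simp
  have ha : a ≠ 0 := by
    intro h; rw [h, zero_mul] at hab; exact one_ne_zero hab.symm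
  have hb : b ≠ 0 := by
    intro h; rw [h, mul_zero] at hab; exact one_ne_zero hab.symm
  set ψ : ℤ → ℂ := fun k => -b * φ (n + 1) k + (v n - E) * φ n k - a * φ (n - 1) k with hψ
  have hrec : ∀ k : ℤ, -a * ψ (k + 1) - b * ψ (k - 1) + v k * ψ k = E * ψ k := by
    intro k
    simp only [hψ]
    linear_combination (-b) * hsol (n + 1) k + (v n - E) * hsol n k + (-a) * hsol (n - 1) k
  -- initial value at n
  have hpn : ψ n = 0 := by
    have h := hsol (n + 1) (n + 1)
    rw [hzero (n + 1), hone (n + 1), show (n + 1 : ℤ) - 1 = n from by ring] at h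
    have hb1 : φ (n - 1) n = b := by
      have := hone (n - 1)
      rwa [show (n - 1 : ℤ) + 1 = n from by ring] at this
    simp only [hψ, hzero n, hb1]
    linear_combination h
  -- initial value at n + 1
  have hpn1 : ψ (n + 1) = 0 := by
    have h := hsol (n - 1) n
    rw [show (n : ℤ) - 1 = n - 1 from rfl, hzero (n - 1)] at h
    have hb1 : φ (n - 1) n = b := by
      have := hone (n - 1)
      rwa [show (n - 1 : ℤ) + 1 = n from by ring] at this
    rw [hb1] at h
    simp only [hψ, hzero (n + 1), hone n]
    linear_combination h
  have key : ∀ k : ℤ, ψ (n + k) = 0 ∧ ψ (n + k + 1) = 0 := by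
    intro k
    induction k using Int.induction_on with
    | zero => simpa using ⟨hpn, hpn1⟩
    | succ i ih =>
      have e1 : n + ((i : ℤ) + 1) = n + i + 1 := by ring
      rw [e1]
      refine ⟨ih.2, ?_⟩
      have h := hrec (n + i + 1)
      rw [show (n + (i : ℤ) + 1) - 1 = n + i from by ring, ih.1, ih.2] at h
      have h' : a * ψ (n + i + 1 + 1) = 0 := by linear_combination -h
      exact (mul_eq_zero.mp h').resolve_left ha
    | pred i ih =>
      have e1 : n + (-(i : ℤ) - 1) = n - i - 1 := by ring
      have e2 : n + (-(i : ℤ) - 1) + 1 = n + -(i : ℤ) := by ring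
      rw [e2, e1]
      refine ⟨?_, ih.1⟩
      have h := hrec (n + -(i : ℤ))
      rw [show n + -(i : ℤ) + 1 = n + -(i : ℤ) + 1 from rfl, ih.1,
        show n + -(i : ℤ) - 1 = n - i - 1 from by ring] at h
      have hih2 : ψ (n + -(i : ℤ) + 1) = 0 := ih.2
      rw [hih2] at h
      have h' : b * ψ (n - i - 1) = 0 := by linear_combination -h
      exact (mul_eq_zero.mp h').resolve_left hb
  have := (key (m - n)).1
  rw [show n + (m - n) = m from by ring] at this
  simpa [hψ] using this
end
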